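/- arXiv:1603.06251 — 9 statements merged into one kernel-verified Lean document; each statement's English description precedes it below -/
import Mathlib

section
/- The set Δ of distance distribution functions φ : [0,∞] → [0,1] satisfying the left-continuity condition φ(β) = sup_{α<β} φ(α), equipped with the pointwise order and the convolution product (φ ⊗ ψ)(γ) = sup_{α+β≤γ} φ(α)·ψ(β), is a commutative quantale whose unit κ satisfies κ(0) = 0 and κ(α) = 1 for all α > 0. -/
/-!
Multiplication on `ℝ≥0∞` distributes over arbitrary suprema, so every law reduces to comparing
suprema. Both bracketings of a triple convolution are the supremum of `φ α * ψ β * χ δ` over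
`α + β + δ ≤ γ`. Left continuity of `φ ⊗ ψ` comes from writing `φ α` and `ψ β` as suprema over
`α' < α` and `β' < β`, since then `α' + β' < γ`. The unit law holds because `φ γ` is the
supremum over `α < γ` of `φ α = φ α * κ (γ - α)`.
-/

open ENNReal

/-- A distance distribution function: values in `[0,1]` and left continuous. -/
def IsDDF (φ : ENNReal → ENNReal) : Prop :=
  (∀ x, φ x ≤ 1) ∧ ∀ β, φ β = ⨆ (α) (_ : α < β), φ α

/-- The convolution product on `Δ`. -/
noncomputable def conv (φ ψ : ENNReal → ENNReal) : ENNReal → ENNReal :=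
  fun γ => ⨆ (α) (β) (_ : α + β ≤ γ), φ α * ψ β

/-- The unit of the convolution product. -/
noncomputable def kappa : ENNReal → ENNReal := fun α => if α = 0 then 0 else 1

def IsLeftContinuousSup (φ : ℝ≥0∞ → ℝ≥0∞) : Prop :=
  ∀ β, φ β = ⨆ (α) (_ : α < β), φ α

namespace IsLeftContinuousSup

variable {φ : ℝ≥0∞ → ℝ≥0∞}

theorem monotone (hφ : IsLeftContinuousSup φ) : Monotone φ := by
  intro a b hab
  rcases hab.lt_or_eq with hlt | rfl
  · rw [hφ b]
    exact le_iSup₂_of_le a hlt le_rfl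
  · exact le_rfl

theorem biSup {S : Set (ℝ≥0∞ → ℝ≥0∞)} (hS : ∀ φ ∈ S, IsLeftContinuousSup φ) :
    IsLeftContinuousSup fun x => ⨆ φ ∈ S, φ x := by
  intro β
  calc ⨆ φ ∈ S, φ β = ⨆ (φ) (_ : φ ∈ S) (α) (_ : α < β), φ α :=
        iSup_congr fun φ => iSup_congr fun hφ => hS φ hφ β
    _ = ⨆ (α) (_ : α < β) (φ) (_ : φ ∈ S), φ α := iSup₂_comm _

end IsLeftContinuousSup

section Convolution

variable {φ ψ χ : ℝ≥0∞ → ℝ≥0∞} {α β γ c : ℝ≥0∞}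

theorem conv_le_iff : conv φ ψ γ ≤ c ↔ ∀ α β, α + β ≤ γ → φ α * ψ β ≤ c := by
  simp only [conv, iSup_le_iff]

theorem mul_le_conv (h : α + β ≤ γ) : φ α * ψ β ≤ conv φ ψ γ :=
  le_iSup₂_of_le α β (le_iSup_of_le h le_rfl)

theorem monotone_conv : Monotone (conv φ ψ) := fun _ _ hab =>
  conv_le_iff.2 fun _ _ h => mul_le_conv (h.trans hab)

theorem conv_le_one (hφ : ∀ x, φ x ≤ 1) (hψ : ∀ x, ψ x ≤ 1) (γ : ℝ≥0∞) : conv φ ψ γ ≤ 1 :=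
  conv_le_iff.2 fun α β _ => mul_le_one' (hφ α) (hψ β)

theorem conv_comm (φ ψ : ℝ≥0∞ → ℝ≥0∞) : conv φ ψ = conv ψ φ := by
  funext γ
  apply le_antisymm <;>
    exact conv_le_iff.2 fun α β h => by
      rw [mul_comm]
      exact mul_le_conv (by rwa [add_comm])

theorem conv_mul_le_iff {a y : ℝ≥0∞} :
    conv φ ψ a * y ≤ c ↔ ∀ α β, α + β ≤ a → φ α * ψ β * y ≤ c := by
  simp only [conv, ENNReal.iSup_mul, iSup_le_iff]

theorem conv_conv_le_iff :
    conv (conv φ ψ) χ γ ≤ c ↔ ∀ α β δ, α + β + δ ≤ γ → φ α * ψ β * χ δ ≤ c := by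
  simp only [conv_le_iff, conv_mul_le_iff]
  constructor
  · intro h α β δ hγ
    exact h (α + β) δ hγ α β le_rfl
  · intro h a δ hγ α β ha
    exact h α β δ ((add_le_add_left ha δ).trans hγ)

theorem conv_assoc (φ ψ χ : ℝ≥0∞ → ℝ≥0∞) : conv (conv φ ψ) χ = conv φ (conv ψ χ) := by
  funext γ
  refine eq_of_forall_ge_iff fun c => ?_
  rw [conv_comm φ (conv ψ χ), conv_conv_le_iff, conv_conv_le_iff]
  refine ⟨fun h β δ α hγ => ?_, fun h α β δ hγ => ?_⟩
  · rw [mul_comm, ← mul_assoc]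
    exact h α β δ (by rwa [add_comm, ← add_assoc] at hγ)
  · rw [mul_assoc, mul_comm]
    exact h β δ α (by rwa [add_comm, ← add_assoc])

theorem conv_biSup (φ : ℝ≥0∞ → ℝ≥0∞) (S : Set (ℝ≥0∞ → ℝ≥0∞)) :
    conv φ (fun x => ⨆ ψ ∈ S, ψ x) = fun x => ⨆ ψ ∈ S, conv φ ψ x := by
  funext γ
  refine eq_of_forall_ge_iff fun c => ?_
  simp only [conv_le_iff, ENNReal.mul_iSup, iSup_le_iff]
  exact ⟨fun h ψ hψ α β hγ => h α β hγ ψ hψ, fun h α β hγ ψ hψ => h ψ hψ α β hγ⟩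

theorem IsLeftContinuousSup.conv (hφ : IsLeftContinuousSup φ) (hψ : IsLeftContinuousSup ψ) :
    IsLeftContinuousSup (conv φ ψ) := by
  intro γ
  refine le_antisymm (conv_le_iff.2 fun α β hγ => ?_)
    (iSup₂_le fun γ' hγ' => monotone_conv hγ'.le)
  rw [hφ α, hψ β]
  simp only [ENNReal.iSup_mul, ENNReal.mul_iSup, iSup_le_iff]
  intro β' hβ' α' hα'
  exact le_iSup₂_of_le (α' + β') ((ENNReal.add_lt_add hα' hβ').trans_le hγ) (mul_le_conv le_rfl)

end Convolution

theorem kappa_zero : kappa 0 = 0 := if_pos rfl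

theorem kappa_of_ne_zero {α : ℝ≥0∞} (h : α ≠ 0) : kappa α = 1 := if_neg h

theorem kappa_le_one (α : ℝ≥0∞) : kappa α ≤ 1 := by
  unfold kappa
  split_ifs <;> simp

theorem isLeftContinuousSup_kappa : IsLeftContinuousSup kappa := by
  intro β
  rcases eq_or_ne β 0 with rfl | hβ
  · simp [kappa_zero]
  · obtain ⟨α, hα, hαβ⟩ := exists_between (pos_iff_ne_zero.2 hβ)
    refine le_antisymm ?_ (iSup₂_le fun _ _ => (kappa_le_one _).trans (kappa_of_ne_zero hβ).ge)
    rw [kappa_of_ne_zero hβ, ← kappa_of_ne_zero hα.ne']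
    exact le_iSup₂_of_le α hαβ le_rfl

theorem conv_kappa {φ : ℝ≥0∞ → ℝ≥0∞} (hφ : IsLeftContinuousSup φ) : conv φ kappa = φ := by
  funext γ
  refine le_antisymm (conv_le_iff.2 fun α β hγ => ?_) ?_
  · rcases eq_or_ne β 0 with rfl | hβ
    · simp [kappa_zero]
    · rw [kappa_of_ne_zero hβ, mul_one]
      exact hφ.monotone (le_self_add.trans hγ)
  · rw [hφ γ]
    refine iSup₂_le fun α hα => ?_
    calc φ α = φ α * kappa (γ - α) := by rw [kappa_of_ne_zero (tsub_pos_of_lt hα).ne', mul_one]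
      _ ≤ conv φ kappa γ := mul_le_conv (add_tsub_cancel_of_le hα.le).le

theorem isDDF_kappa : IsDDF kappa := ⟨kappa_le_one, isLeftContinuousSup_kappa⟩

theorem IsDDF.conv {φ ψ : ℝ≥0∞ → ℝ≥0∞} (hφ : IsDDF φ) (hψ : IsDDF ψ) : IsDDF (conv φ ψ) :=
  ⟨conv_le_one hφ.1 hψ.1, IsLeftContinuousSup.conv hφ.2 hψ.2⟩

theorem isDDF_biSup {S : Set (ℝ≥0∞ → ℝ≥0∞)} (hS : ∀ φ ∈ S, IsDDF φ) :
    IsDDF fun x => ⨆ φ ∈ S, φ x :=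
  ⟨fun x => iSup₂_le fun φ hφ => (hS φ hφ).1 x, IsLeftContinuousSup.biSup fun φ hφ => (hS φ hφ).2⟩

/-- `Δ`, with the pointwise order and the convolution product, is a commutative quantale
with unit `κ` (where `κ 0 = 0` and `κ α = 1` for `α > 0`): it is closed under convolution
and pointwise suprema, the convolution is commutative, associative, unital with unit `κ`,
and distributes over arbitrary pointwise suprema. -/
theorem Delta_commutative_quantale :
    IsDDF kappa ∧ kappa 0 = 0 ∧ (∀ α, 0 < α → kappa α = 1) ∧
    (∀ φ ψ, IsDDF φ → IsDDF ψ → IsDDF (conv φ ψ)) ∧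
    (∀ φ ψ, conv φ ψ = conv ψ φ) ∧
    (∀ φ ψ χ, conv (conv φ ψ) χ = conv φ (conv ψ χ)) ∧
    (∀ φ, IsDDF φ → conv φ kappa = φ) ∧
    (∀ S : Set (ENNReal → ENNReal), (∀ φ ∈ S, IsDDF φ) →
        IsDDF (fun x => ⨆ φ ∈ S, φ x)) ∧
    (∀ (φ : ENNReal → ENNReal) (S : Set (ENNReal → ENNReal)), IsDDF φ →
        (∀ ψ ∈ S, IsDDF ψ) →
        conv φ (fun x => ⨆ ψ ∈ S, ψ x) = fun x => ⨆ ψ ∈ S, conv φ ψ x) :=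
  ⟨isDDF_kappa, kappa_zero, fun _ hα => kappa_of_ne_zero hα.ne', fun _ _ => IsDDF.conv, conv_comm,
    conv_assoc, fun _ hφ => conv_kappa hφ.2, fun _ => isDDF_biSup, fun φ S _ _ => conv_biSup φ S⟩
end

section
/- The map τ : [0,1] → Δ defined by τ(u)(γ) = u if γ > 0 and τ(u)(0) = 0 is a homomorphism of quantales from ([0,1], ≤, ·) to (Δ, ⊗). -/
/-!
Away from `0` each `τ(u)` is the constant `u`, so left-continuity and suprema are checked
pointwise. For the product, `α + β ≤ 0` forces `α = 0`, where `τ(u)` vanishes, while for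
`γ > 0` the split `γ = γ/2 + γ/2` already attains the upper bound `u · v`.
-/

open ENNReal

/-- `τ(u)(γ) = u` if `γ > 0`, and `τ(u)(0) = 0`. -/
noncomputable def tauMap (u : ENNReal) : ENNReal → ENNReal :=
  fun γ => if γ = 0 then 0 else u

@[simp]
lemma tauMap_apply_zero (u : ENNReal) : tauMap u 0 = 0 := if_pos rfl

lemma tauMap_apply_of_ne_zero (u : ENNReal) {γ : ENNReal} (hγ : γ ≠ 0) : tauMap u γ = u :=
  if_neg hγ

lemma tauMap_le (u γ : ENNReal) : tauMap u γ ≤ u := by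
  unfold tauMap; split_ifs <;> simp

lemma conv_apply_zero {φ : ENNReal → ENNReal} (hφ : φ 0 = 0) (ψ : ENNReal → ENNReal) :
    conv φ ψ 0 = 0 := by
  refine le_antisymm (iSup₂_le fun α β => iSup_le fun hαβ => ?_) zero_le
  have hα : α = 0 := nonpos_iff_eq_zero.mp (le_add_right le_rfl |>.trans hαβ)
  simp [hα, hφ]

lemma conv_le_mul {φ ψ : ENNReal → ENNReal} {u v : ENNReal} (hφ : ∀ α, φ α ≤ u)
    (hψ : ∀ β, ψ β ≤ v) (γ : ENNReal) : conv φ ψ γ ≤ u * v :=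
  iSup₂_le fun α β => iSup_le fun _ => mul_le_mul' (hφ α) (hψ β)

lemma mul_le_conv_of_add_le (φ ψ : ENNReal → ENNReal) {α β γ : ENNReal} (h : α + β ≤ γ) :
    φ α * ψ β ≤ conv φ ψ γ :=
  le_iSup₂_of_le α β (le_iSup_of_le h le_rfl)

lemma tauMap_isDDF {u : ENNReal} (hu : u ≤ 1) : IsDDF (tauMap u) := by
  refine ⟨fun γ => (tauMap_le u γ).trans hu, fun β => ?_⟩
  rcases eq_or_ne β 0 with rfl | hβ
  · simp
  refine le_antisymm ?_ <| iSup₂_le fun α _ =>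
    (tauMap_le u α).trans_eq (tauMap_apply_of_ne_zero u hβ).symm
  obtain ⟨α, hα0, hαβ⟩ := exists_between (pos_iff_ne_zero.mpr hβ)
  calc tauMap u β = tauMap u α := by
        rw [tauMap_apply_of_ne_zero u hβ, tauMap_apply_of_ne_zero u hα0.ne']
    _ ≤ ⨆ (α) (_ : α < β), tauMap u α := le_iSup₂_of_le α hαβ le_rfl

lemma tauMap_sSup (S : Set ENNReal) : tauMap (sSup S) = fun γ => ⨆ u ∈ S, tauMap u γ := by
  funext γ
  rcases eq_or_ne γ 0 with rfl | hγ
  · simp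
  simp only [tauMap_apply_of_ne_zero _ hγ, sSup_eq_iSup]

lemma conv_tauMap (u v : ENNReal) : conv (tauMap u) (tauMap v) = tauMap (u * v) := by
  funext γ
  rcases eq_or_ne γ 0 with rfl | hγ
  · simp [conv_apply_zero]
  rw [tauMap_apply_of_ne_zero _ hγ]
  refine le_antisymm (conv_le_mul (tauMap_le u) (tauMap_le v) γ) ?_
  have hγ2 : γ / 2 ≠ 0 := by simp [ENNReal.div_eq_zero_iff, hγ]
  calc u * v = tauMap u (γ / 2) * tauMap v (γ / 2) := by
        rw [tauMap_apply_of_ne_zero u hγ2, tauMap_apply_of_ne_zero v hγ2]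
    _ ≤ conv (tauMap u) (tauMap v) γ := mul_le_conv_of_add_le _ _ (ENNReal.add_halves γ).le

lemma tauMap_one : tauMap 1 = kappa := rfl

/-- `τ : ([0,1], ≤, ·) → (Δ, ⊗)` is a homomorphism of quantales: it takes values in `Δ`,
preserves arbitrary suprema, the multiplication, and the unit. -/
theorem tau_quantale_hom :
    (∀ u, u ≤ 1 → IsDDF (tauMap u)) ∧
    (∀ S : Set ENNReal, (∀ u ∈ S, u ≤ 1) →
        tauMap (sSup S) = fun γ => ⨆ u ∈ S, tauMap u γ) ∧
    (∀ u v, u ≤ 1 → v ≤ 1 → conv (tauMap u) (tauMap v) = tauMap (u * v)) ∧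
    tauMap 1 = kappa :=
  ⟨fun _ hu => tauMap_isDDF hu, fun S _ => tauMap_sSup S, fun u v _ _ => conv_tauMap u v,
    tauMap_one⟩
end

section
/- Every distance distribution function φ ∈ Δ admits the presentation φ = sup_{γ ∈ [0,∞]} σ(γ) ⊗ τ(φ(γ)), where σ(γ)(x) = 0 if x ≤ γ, σ(γ)(x) = 1 otherwise, and τ(u)(x) = u if x > 0, τ(u)(0) = 0. -/
open ENNReal

noncomputable def sigmaMap (α : ENNReal) : ENNReal → ENNReal :=
  fun γ => if γ ≤ α then 0 else 1

lemma conv_sigmaMap_tauMap (γ u x : ENNReal) :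
    conv (sigmaMap γ) (tauMap u) x = if γ < x then u else 0 := by
  apply le_antisymm
  · refine iSup_le fun α => iSup_le fun β => iSup_le fun hαβ => ?_
    unfold sigmaMap
    by_cases hαγ : α ≤ γ
    · simp [hαγ]
    · have hγx : γ < x := (not_le.mp hαγ).trans_le (le_self_add.trans hαβ)
      rw [if_neg hαγ, if_pos hγx, one_mul]
      unfold tauMap
      split_ifs <;> simp
  · split_ifs with hγx
    · -- `c ∈ (γ, x)` is finite, so `x - c` is a positive distance with `c + (x - c) = x`.
      obtain ⟨c, hγc, hcx⟩ := exists_between hγx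
      have hsum : c + (x - c) ≤ x := (add_tsub_cancel_of_le hcx.le).le
      refine le_iSup_of_le c (le_iSup_of_le (x - c) (le_iSup_of_le hsum ?_))
      simp [sigmaMap, tauMap, not_le.mpr hγc, (tsub_pos_of_lt hcx).ne']
    · exact zero_le

/-- Every distance distribution function `φ` admits the presentation
`φ = ⨆ γ, σ(γ) ⊗ τ(φ(γ))`. -/
theorem ddf_presentation (φ : ENNReal → ENNReal) (h : IsDDF φ) :
    φ = fun x => ⨆ γ : ENNReal, conv (sigmaMap γ) (tauMap (φ γ)) x := by
  funext x
  simp only [conv_sigmaMap_tauMap, ← bot_eq_zero, ← iSup_eq_if]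
  exact h.2 x
end

section
/- For a divisible quantale V, the following data form a category DV (the quantaloid of diagonals): objects are elements of V; morphisms d : u → v are elements d ∈ V with d ≤ u ∧ v; composition of d : u → v with e : v → w is e ⊗ (v ↘ d) (which equals (e ↙ v) ⊗ d); and the identity on v is v itself. In particular, composition is associative and unital. -/
/-!
Mathlib's residuations are `v ⇨ᵣ d = v ↘ d` and `v ⇨ₗ e = e ↙ v`.
Divisibility makes residuation exact: `v * (v ⇨ᵣ d) = d` and `(v ⇨ₗ e) * v = e` whenever
`d, e ≤ v`, and it makes multiplication deflationary (`a = c * ⊤` gives `a * b ≤ a`).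
Writing `e = (v ⇨ₗ e) * v` shows that both descriptions of the composite agree,
`e * (v ⇨ᵣ d) = (v ⇨ₗ e) * d`; associativity of composition then reduces to that of `*`.
-/

namespace Quantale

def IsDivisible (V : Type*) [Mul V] [LE V] : Prop :=
  ∀ u v : V, u ≤ v → ∃ a b : V, a * v = u ∧ v * b = u

section Semigroup

variable {V : Type*} [Semigroup V] [CompleteLattice V] [IsQuantale V]

theorem mul_rightMulResiduation_le (x y : V) : x * (x ⇨ᵣ y) ≤ y :=
  rightMulResiduation_le_iff_mul_le.mp le_rfl

theorem leftMulResiduation_mul_le (x y : V) : (x ⇨ₗ y) * x ≤ y :=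
  leftMulResiduation_le_iff_mul_le.mp le_rfl

namespace IsDivisible

variable {d e f v w : V}

theorem mul_le_left (hV : IsDivisible V) (a b : V) : a * b ≤ a := by
  obtain ⟨c, -, hc, -⟩ := hV a ⊤ le_top
  calc a * b = c * (⊤ * b) := by rw [← mul_assoc, hc]
    _ ≤ c * ⊤ := mul_le_mul_right le_top c
    _ = a := hc

theorem mul_rightMulResiduation (hV : IsDivisible V) (hd : d ≤ v) : v * (v ⇨ᵣ d) = d := by
  refine le_antisymm (mul_rightMulResiduation_le v d) ?_
  obtain ⟨-, b, -, hb⟩ := hV d v hd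
  calc d = v * b := hb.symm
    _ ≤ v * (v ⇨ᵣ d) := mul_le_mul_right (rightMulResiduation_le_iff_mul_le.mpr hb.le) v

theorem leftMulResiduation_mul (hV : IsDivisible V) (he : e ≤ v) : (v ⇨ₗ e) * v = e := by
  refine le_antisymm (leftMulResiduation_mul_le v e) ?_
  obtain ⟨a, -, ha, -⟩ := hV e v he
  calc e = a * v := ha.symm
    _ ≤ (v ⇨ₗ e) * v := mul_le_mul_left (leftMulResiduation_le_iff_mul_le.mpr ha.le) v

theorem mul_rightMulResiduation_eq_leftMulResiduation_mul (hV : IsDivisible V) (hd : d ≤ v)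
    (he : e ≤ v) : e * (v ⇨ᵣ d) = (v ⇨ₗ e) * d := by
  conv_lhs => rw [← hV.leftMulResiduation_mul he]
  rw [mul_assoc, hV.mul_rightMulResiduation hd]

theorem mul_rightMulResiduation_mul_assoc (hV : IsDivisible V) (he : e ≤ w) (hf : f ≤ w)
    (x : V) : f * (w ⇨ᵣ (e * x)) = f * (w ⇨ᵣ e) * x := by
  have hex : e * x ≤ w := (hV.mul_le_left e x).trans he
  rw [hV.mul_rightMulResiduation_eq_leftMulResiduation_mul hex hf,
    hV.mul_rightMulResiduation_eq_leftMulResiduation_mul he hf, mul_assoc]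

theorem mul_rightMulResiduation_le_inf (hV : IsDivisible V) {u : V} (hdu : d ≤ u)
    (hdv : d ≤ v) (hev : e ≤ v) (hew : e ≤ w) : e * (v ⇨ᵣ d) ≤ u ⊓ w :=
  le_inf (calc e * (v ⇨ᵣ d) ≤ v * (v ⇨ᵣ d) := mul_le_mul_left hev _
      _ = d := hV.mul_rightMulResiduation hdv
      _ ≤ u := hdu)
    ((hV.mul_le_left e _).trans hew)

end IsDivisible

end Semigroup

section Monoid

variable {V : Type*} [Monoid V] [CompleteLattice V] [IsQuantale V]

theorem one_le_rightMulResiduation_self (u : V) : 1 ≤ u ⇨ᵣ u :=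
  rightMulResiduation_le_iff_mul_le.mpr (mul_one u).le

theorem IsDivisible.mul_rightMulResiduation_self (hV : IsDivisible V) (d u : V) :
    d * (u ⇨ᵣ u) = d :=
  le_antisymm (hV.mul_le_left d _) <|
    calc d = d * 1 := (mul_one d).symm
      _ ≤ d * (u ⇨ᵣ u) := mul_le_mul_right (one_le_rightMulResiduation_self u) d

end Monoid

end Quantale

open Quantale in
/-- For a divisible quantale `V`, the diagonals form a category `DV`: objects are elements
of `V`, a morphism `d : u → v` is `d ≤ u ⊓ v`, composition of `d : u → v` and `e : v → w`
is `e * (v ↘ d)` (which equals `(e ↙ v) * d`), and the identity on `v` is `v` itself;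
composition is well-defined (lands in morphisms `u → w`), associative and unital.
Here `v ↘ d = sSup {a | v * a ≤ d}` and `e ↙ v = sSup {a | a * v ≤ e}`. -/
theorem diagonal_quantaloid_category (V : Type*) [CompleteLattice V] [Monoid V]
    (hl : ∀ (u : V) (S : Set V), u * sSup S = ⨆ v ∈ S, u * v)
    (hr : ∀ (u : V) (S : Set V), sSup S * u = ⨆ v ∈ S, v * u)
    (hdiv : ∀ u v : V, u ≤ v → ∃ a b : V, a * v = u ∧ v * b = u) :
    -- composition is well-defined
    (∀ u v w d e : V, d ≤ u ⊓ v → e ≤ v ⊓ w →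
        e * sSup {a | v * a ≤ d} ≤ u ⊓ w) ∧
    -- the two descriptions of composition agree
    (∀ u v w d e : V, d ≤ u ⊓ v → e ≤ v ⊓ w →
        e * sSup {a | v * a ≤ d} = sSup {a | a * v ≤ e} * d) ∧
    -- right unit law: `d ∘ 1_u = d` for `d : u → v`
    (∀ u v d : V, d ≤ u ⊓ v → d * sSup {a | u * a ≤ u} = d) ∧
    -- left unit law: `1_v ∘ d = d` for `d : u → v`
    (∀ u v d : V, d ≤ u ⊓ v → v * sSup {a | v * a ≤ d} = d) ∧
    -- associativity: for `d : u → v`, `e : v → w`, `f : w → z`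
    (∀ u v w z d e f : V, d ≤ u ⊓ v → e ≤ v ⊓ w → f ≤ w ⊓ z →
        f * sSup {a | w * a ≤ e * sSup {b | v * b ≤ d}} =
          (f * sSup {a | w * a ≤ e}) * sSup {b | v * b ≤ d}) := by
  have : IsQuantale V := ⟨hl, fun S u => hr u S⟩
  have hV : IsDivisible V := hdiv
  refine ⟨fun u v w d e hd he => ?_, fun u v w d e hd he => ?_, fun u v d _ => ?_,
    fun u v d hd => ?_, fun u v w z d e f _ he hf => ?_⟩
  · exact hV.mul_rightMulResiduation_le_inf (hd.trans inf_le_left) (hd.trans inf_le_right)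
      (he.trans inf_le_left) (he.trans inf_le_right)
  · exact hV.mul_rightMulResiduation_eq_leftMulResiduation_mul (hd.trans inf_le_right)
      (he.trans inf_le_left)
  · exact hV.mul_rightMulResiduation_self d u
  · exact hV.mul_rightMulResiduation (hd.trans inf_le_right)
  · exact hV.mul_rightMulResiduation_mul_assoc (he.trans inf_le_right) (hf.trans inf_le_left) _
end

section
/- For a divisible quantale V, the backward globalization map δ : DV → V, sending a diagonal (d : u → v) to v ↘ d, is a lax homomorphism satisfying δ ∘ ι = id_V: it is monotone on hom-sets, satisfies 1 ≤ δ(1_v) (i.e., k ≤ v ↘ v), and δ(e) ⊗ δ(d) ≤ δ(e ∘ d) for composable diagonals d : u → v, e : v → w. -/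
/-! The backward globalization `δ(d) = v ↘ d` is the right residual `rightResidual v d`. The
unit laws only concern suprema; the lax multiplication law comes from the counit inequality
`v * (v ↘ d) ≤ d`, which needs `*` to preserve joins on the left, together with the
monotonicity of `*` on the right. -/

section Residual

variable {V : Type*} [CompleteLattice V] [Monoid V]

def rightResidual (v d : V) : V := sSup {a | v * a ≤ d}

theorem mul_le_mul_right_of_sSup_mul
    (hr : ∀ (u : V) (S : Set V), sSup S * u = ⨆ v ∈ S, v * u) {x y : V} (hxy : x ≤ y) (z : V) :
    x * z ≤ y * z := by
  have hy : sSup {x, y} * z = x * z ⊔ y * z := by rw [hr, iSup_pair]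
  rw [sSup_pair, sup_eq_right.mpr hxy] at hy
  exact hy ▸ le_sup_left

theorem mul_rightResidual_le
    (hl : ∀ (u : V) (S : Set V), u * sSup S = ⨆ v ∈ S, u * v) (v d : V) :
    v * rightResidual v d ≤ d := by
  rw [rightResidual, hl]
  exact iSup₂_le fun _ ha => ha

theorem one_rightResidual (v : V) : rightResidual 1 v = v := by
  simp only [rightResidual, one_mul]
  exact csSup_Iic

theorem one_le_rightResidual_self (v : V) : 1 ≤ rightResidual v v :=
  le_sSup (by simp)

theorem rightResidual_mono_right {v d d' : V} (hdd' : d ≤ d') :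
    rightResidual v d ≤ rightResidual v d' :=
  sSup_le_sSup fun _ ha => ha.trans hdd'

theorem rightResidual_mul_rightResidual_le
    (hl : ∀ (u : V) (S : Set V), u * sSup S = ⨆ v ∈ S, u * v)
    (hr : ∀ (u : V) (S : Set V), sSup S * u = ⨆ v ∈ S, v * u) (v w d e : V) :
    rightResidual w e * rightResidual v d ≤ rightResidual w (e * rightResidual v d) := by
  refine le_sSup ?_
  change w * (rightResidual w e * rightResidual v d) ≤ e * rightResidual v d
  rw [← mul_assoc]
  exact mul_le_mul_right_of_sSup_mul hr (mul_rightResidual_le hl w e) _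

end Residual

theorem delta_lax_hom_general (V : Type*) [CompleteLattice V] [Monoid V]
    (hl : ∀ (u : V) (S : Set V), u * sSup S = ⨆ v ∈ S, u * v)
    (hr : ∀ (u : V) (S : Set V), sSup S * u = ⨆ v ∈ S, v * u) :
    -- δ ∘ ι = id : δ(v : 1 → 1) = 1 ↘ v = v
    (∀ v : V, v ≤ (1 : V) ⊓ 1 → sSup {a | (1 : V) * a ≤ v} = v) ∧
    -- monotone on hom-sets
    (∀ u v d d' : V, d ≤ d' → d' ≤ u ⊓ v →
        sSup {a | v * a ≤ d} ≤ sSup {a | v * a ≤ d'}) ∧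
    -- lax unit law: 1 ≤ δ(1_v)
    (∀ v : V, (1 : V) ≤ sSup {a | v * a ≤ v}) ∧
    -- lax multiplication law: δ(e) * δ(d) ≤ δ(e ∘ d)
    (∀ u v w d e : V, d ≤ u ⊓ v → e ≤ v ⊓ w →
        sSup {a | w * a ≤ e} * sSup {a | v * a ≤ d} ≤
          sSup {a | w * a ≤ e * sSup {b | v * b ≤ d}}) :=
  ⟨fun v _ => one_rightResidual v,
    fun _ _ _ _ hdd' _ => rightResidual_mono_right hdd',
    one_le_rightResidual_self,
    fun _ v w d e _ _ => rightResidual_mul_rightResidual_le hl hr v w d e⟩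

/-- For a divisible quantale `V`, the backward globalization `δ : DV → V`, sending a
diagonal `d : u → v` to `v ↘ d = sSup {a | v * a ≤ d}`, is a lax homomorphism with
`δ ∘ ι = id`: it splits `ι`, is monotone on hom-sets, satisfies `1 ≤ δ(1_v)` (i.e.
`1 ≤ v ↘ v`), and `δ(e) * δ(d) ≤ δ(e ∘ d)` for composable diagonals `d : u → v`,
`e : v → w` (where `e ∘ d = e * (v ↘ d)` is a morphism `u → w`). -/
theorem delta_lax_hom (V : Type*) [CompleteLattice V] [Monoid V]
    (hl : ∀ (u : V) (S : Set V), u * sSup S = ⨆ v ∈ S, u * v)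
    (hr : ∀ (u : V) (S : Set V), sSup S * u = ⨆ v ∈ S, v * u)
    (hdiv : ∀ u v : V, u ≤ v → ∃ a b : V, a * v = u ∧ v * b = u) :
    -- δ ∘ ι = id : δ(v : 1 → 1) = 1 ↘ v = v
    (∀ v : V, v ≤ (1 : V) ⊓ 1 → sSup {a | (1 : V) * a ≤ v} = v) ∧
    -- monotone on hom-sets
    (∀ u v d d' : V, d ≤ d' → d' ≤ u ⊓ v →
        sSup {a | v * a ≤ d} ≤ sSup {a | v * a ≤ d'}) ∧
    -- lax unit law: 1 ≤ δ(1_v)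
    (∀ v : V, (1 : V) ≤ sSup {a | v * a ≤ v}) ∧
    -- lax multiplication law: δ(e) * δ(d) ≤ δ(e ∘ d)
    (∀ u v w d e : V, d ≤ u ⊓ v → e ≤ v ⊓ w →
        sSup {a | w * a ≤ e} * sSup {a | v * a ≤ d} ≤
          sSup {a | w * a ≤ e * sSup {b | v * b ≤ d}}) :=
  delta_lax_hom_general V hl hr
end

section
/- A D([0,∞])-category is exactly a partial metric space: a set X with a function a : X × X → [0,∞] satisfying a(x,x) ≤ a(x,y) and a(y,y) ≤ a(x,y) and a(x,z) ≤ a(x,y) − a(y,y) + a(y,z) for all x, y, z ∈ X (where subtraction is truncated appropriately and a(y,y) ≤ a(x,y) ensures it is well-defined). -/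
universe u

/-- A `D([0,∞])`-category: a set `X` with an array map `arr : X → [0,∞]` and
`d x y : arr x ⇀ arr y` a diagonal, i.e. `max (arr x) (arr y) ≤ d x y`, subject to
`1_{arr x} ≤ d x x` (i.e. `d x x ≤ arr x` in the natural order) and the composition law
`d x z ≤ (d x y - arr y) + d y z` (composition of diagonals being `e - v + d`). -/
structure DInfCat (X : Type u) where
  arr : X → ENNReal
  d : X → X → ENNReal
  hom : ∀ x y, max (arr x) (arr y) ≤ d x y
  refl : ∀ x, d x x ≤ arr x
  trans : ∀ x y z, d x z ≤ d x y - arr y + d y z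

/-- A partial metric on `X`. -/
structure PartialMetricOn (X : Type u) where
  d : X → X → ENNReal
  self_le_left : ∀ x y, d x x ≤ d x y
  self_le_right : ∀ x y, d y y ≤ d x y
  triangle : ∀ x y z, d x z ≤ d x y - d y y + d y z

namespace DInfCat

variable {X : Type u}

/-- The array is not extra data: the diagonal condition gives `arr x ≤ d x x`, the unit law
the reverse. -/
theorem arr_eq (c : DInfCat X) (x : X) : c.arr x = c.d x x :=
  le_antisymm ((le_max_left _ _).trans (c.hom x x)) (c.refl x)

theorem d_self_le_left (c : DInfCat X) (x y : X) : c.d x x ≤ c.d x y :=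
  c.arr_eq x ▸ (le_max_left _ _).trans (c.hom x y)

theorem d_self_le_right (c : DInfCat X) (x y : X) : c.d y y ≤ c.d x y :=
  c.arr_eq y ▸ (le_max_right _ _).trans (c.hom x y)

theorem d_triangle (c : DInfCat X) (x y z : X) : c.d x z ≤ c.d x y - c.d y y + c.d y z :=
  c.arr_eq y ▸ c.trans x y z

def toPartialMetricOn (c : DInfCat X) : PartialMetricOn X where
  d := c.d
  self_le_left := c.d_self_le_left
  self_le_right := c.d_self_le_right
  triangle := c.d_triangle

theorem ext_d {c c' : DInfCat X} (h : c.d = c'.d) : c = c' := by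
  have harr : c.arr = c'.arr := funext fun x => by rw [c.arr_eq, c'.arr_eq, h]
  cases c
  cases c'
  cases h
  cases harr
  rfl

end DInfCat

def PartialMetricOn.toDInfCat {X : Type u} (p : PartialMetricOn X) : DInfCat X where
  arr x := p.d x x
  d := p.d
  hom x y := max_le (p.self_le_left x y) (p.self_le_right x y)
  refl _ := le_rfl
  trans := p.triangle

def DInfCat.equivPartialMetricOn (X : Type u) : DInfCat X ≃ PartialMetricOn X where
  toFun := DInfCat.toPartialMetricOn
  invFun := PartialMetricOn.toDInfCat
  left_inv _ := DInfCat.ext_d rfl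
  right_inv _ := rfl

/-- A `D([0,∞])`-category is exactly a partial metric space; under the correspondence the
distance is unchanged and the array of `x` is `d x x`. -/
theorem dinfcat_is_partial_metric (X : Type u) :
    ∃ e : DInfCat X ≃ PartialMetricOn X,
      ∀ c : DInfCat X, (e c).d = c.d ∧ ∀ x, c.arr x = c.d x x :=
  ⟨DInfCat.equivPartialMetricOn X, fun c => ⟨rfl, c.arr_eq⟩⟩
end

section
/- The right adjoint of the forgetful functor Σ : Met/[0,∞] → Met, expressed in terms of partial metrics, sends a generalized metric space (X, d) to the set X × [0,∞] equipped with the partial metric d⁺((x,α),(y,β)) = d(x,y) + max{α, β}; in particular, d⁺ is a partial metric: it satisfies d⁺(p,p) ≤ d⁺(p,q), d⁺(q,q) ≤ d⁺(p,q), and d⁺(p,r) ≤ d⁺(p,q) − d⁺(q,q) + d⁺(q,r) for all p, q, r ∈ X × [0,∞]. -/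
/-!
The distance part of `d⁺` is a generalized metric and the height part `max α β` satisfies
`max α γ + β ≤ max α β + max β γ`, so `d⁺` satisfies the partial triangle inequality in the
additive form `d⁺(p,r) + d⁺(q,q) ≤ d⁺(p,q) + d⁺(q,r)`. In `[0,∞]` this additive form yields
the subtractive one, because `d⁺(q,q) ≤ d⁺(q,r)` takes care of the case `d⁺(q,q) = ∞`.
-/

noncomputable def dplus {X : Type*} (d : X → X → ENNReal)
    (p q : X × ENNReal) : ENNReal :=
  d p.1 q.1 + max p.2 q.2

theorem max_add_le_max_add_max {α : Type*} [AddCommMonoid α] [LinearOrder α]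
    [IsOrderedAddMonoid α] (a b c : α) : max a c + b ≤ max a b + max b c := by
  rcases max_choice a c with h | h <;> rw [h]
  · exact add_le_add (le_max_left a b) (le_max_left b c)
  · rw [add_comm]
    exact add_le_add (le_max_right a b) (le_max_right b c)

theorem ENNReal.le_tsub_add_of_add_le {x y z c : ENNReal} (h : x + c ≤ y + z) (hcz : c ≤ z) :
    x ≤ y - c + z := by
  rcases eq_or_ne c ⊤ with rfl | hc
  · simp [top_le_iff.mp hcz]
  rw [← ENNReal.add_le_add_iff_right hc, add_assoc]
  exact h.trans le_tsub_add_add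

section dplus

variable {X : Type*} (d : X → X → ENNReal)

theorem dplus_self (hrefl : ∀ x, d x x = 0) (p : X × ENNReal) : dplus d p p = p.2 := by
  simp [dplus, hrefl]

theorem le_dplus_left (p q : X × ENNReal) : p.2 ≤ dplus d p q :=
  le_add_left (le_max_left _ _)

theorem le_dplus_right (p q : X × ENNReal) : q.2 ≤ dplus d p q :=
  le_add_left (le_max_right _ _)

theorem dplus_add_le_dplus_add_dplus (htri : ∀ x y z, d x z ≤ d x y + d y z)
    (p q r : X × ENNReal) : dplus d p r + q.2 ≤ dplus d p q + dplus d q r :=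
  calc dplus d p r + q.2 = d p.1 r.1 + (max p.2 r.2 + q.2) := add_assoc _ _ _
    _ ≤ (d p.1 q.1 + d q.1 r.1) + (max p.2 q.2 + max q.2 r.2) :=
      add_le_add (htri _ _ _) (max_add_le_max_add_max _ _ _)
    _ = dplus d p q + dplus d q r := by unfold dplus; ring

end dplus

/-- For a generalized metric space `(X, d)`, the value of the right adjoint of
`Σ : Met/[0,∞] → Met`, expressed in terms of partial metrics, is `X × [0,∞]` with
`d⁺((x,α),(y,β)) = d x y + max α β`; in particular `d⁺` is a partial metric. -/
theorem dplus_partial_metric {X : Type*} (d : X → X → ENNReal)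
    (hrefl : ∀ x, d x x = 0) (htri : ∀ x y z, d x z ≤ d x y + d y z) :
    (∀ p q : X × ENNReal, dplus d p p ≤ dplus d p q) ∧
    (∀ p q : X × ENNReal, dplus d q q ≤ dplus d p q) ∧
    (∀ p q r : X × ENNReal,
        dplus d p r ≤ dplus d p q - dplus d q q + dplus d q r) := by
  simp only [dplus_self d hrefl]
  exact ⟨le_dplus_left d, le_dplus_right d, fun p q r =>
    ENNReal.le_tsub_add_of_add_le (dplus_add_le_dplus_add_dplus d htri p q r)
      (le_dplus_left d q r)⟩
end

section
/- For any commutative quantale V, the map λ_X : L(V^X) → V^{LX} sending a list (σ¹,…,σⁿ) of functions σⁱ : X → V to the function σ on lists defined by σ(x₁,…,x_m) = σ¹(x₁) ⊗ ⋯ ⊗ σⁿ(x_n) if m = n and σ(x₁,…,x_m) = ⊥ otherwise, is a natural transformation L∘P_V → P_V∘L between the composites of the list functor L (LX = ⋃_{n≥0} Xⁿ) and the V-powerset functor P_V (P_V X = V^X, with P_V f = f_! where (f_!σ)(y) = sup_{f(x)=y} σ(x)). -/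
/-- The distributive law `λ_X : L(V^X) → V^{LX}`: a list `(σ¹,…,σⁿ)` is sent to the
function on lists whose value at `(x₁,…,xₙ)` is `σ¹ x₁ * ⋯ * σⁿ xₙ`, and `⊥` on lists of
the wrong length. -/
noncomputable def lamLaw {V : Type*} [CompleteLattice V] [Monoid V] {X : Type*}
    (σs : List (X → V)) : List X → V := fun xs =>
  if xs.length = σs.length then (List.zipWith (fun σ x => σ x) σs xs).prod else ⊥

/-- The `V`-powerset functor on morphisms: `(f_! σ) y = ⨆_{f x = y} σ x`. -/
noncomputable def fbang {V : Type*} [CompleteLattice V] {X Y : Type*}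
    (f : X → Y) (σ : X → V) : Y → V :=
  fun y => ⨆ x : {x // f x = y}, σ x.1

/-!
Induction on `σs`: the fibre of `List.map f` over `y :: ys` is the product of the fibres of `f`
over `y` and of `List.map f` over `ys`, and in a quantale the product of two sups is the sup of the
products.
-/

section Quantale

variable {V : Type*} [CompleteLattice V]

section Mul

variable [Mul V]

theorem mul_iSup_of_mul_sSup (hl : ∀ (u : V) (S : Set V), u * sSup S = ⨆ v ∈ S, u * v)
    {ι : Sort*} (u : V) (g : ι → V) : u * ⨆ i, g i = ⨆ i, u * g i := by
  rw [iSup, hl, iSup_range]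

theorem mul_bot_of_mul_sSup (hl : ∀ (u : V) (S : Set V), u * sSup S = ⨆ v ∈ S, u * v)
    (u : V) : u * ⊥ = ⊥ := by
  simpa using hl u ∅

end Mul

theorem iSup_mul_iSup_of_mul_sSup [CommMagma V]
    (hl : ∀ (u : V) (S : Set V), u * sSup S = ⨆ v ∈ S, u * v)
    {ι κ : Sort*} (a : ι → V) (b : κ → V) :
    (⨆ i, a i) * (⨆ j, b j) = ⨆ i, ⨆ j, a i * b j := by
  rw [mul_comm, mul_iSup_of_mul_sSup hl]
  simp only [mul_comm _ (a _), mul_iSup_of_mul_sSup hl]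

end Quantale

section LamLaw

variable {V : Type*} [CompleteLattice V] [Monoid V] {X : Type*}

@[simp]
theorem lamLaw_nil_nil : lamLaw ([] : List (X → V)) [] = 1 := by
  simp [lamLaw]

@[simp]
theorem lamLaw_nil_cons (x : X) (xs : List X) : lamLaw ([] : List (X → V)) (x :: xs) = ⊥ := by
  simp [lamLaw]

@[simp]
theorem lamLaw_cons_nil (σ : X → V) (σs : List (X → V)) : lamLaw (σ :: σs) [] = ⊥ := by
  simp [lamLaw]

theorem lamLaw_cons_cons (hbot : ∀ u : V, u * ⊥ = ⊥) (σ : X → V) (σs : List (X → V)) (x : X)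
    (xs : List X) : lamLaw (σ :: σs) (x :: xs) = σ x * lamLaw σs xs := by
  by_cases h : xs.length = σs.length <;> simp [lamLaw, h, hbot]

end LamLaw

section Fbang

variable {V : Type*} [CompleteLattice V] {X Y : Type*} (f : X → Y) (g : List X → V)

@[simp]
theorem fbang_map_nil : fbang (List.map f) g [] = g [] :=
  le_antisymm (iSup_le fun ⟨_, hxs⟩ => (List.map_eq_nil_iff.mp hxs ▸ le_rfl))
    (le_iSup_of_le (f := fun xs : {xs : List X // xs.map f = []} => g xs.1) ⟨[], rfl⟩ le_rfl)

theorem fbang_map_cons (y : Y) (ys : List Y) :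
    fbang (List.map f) g (y :: ys) =
      ⨆ x : {x // f x = y}, ⨆ xs : {xs : List X // xs.map f = ys}, g (x.1 :: xs.1) := by
  apply le_antisymm
  · refine iSup_le fun ⟨xs, hxs⟩ => ?_
    cases xs with
    | nil => cases hxs
    | cons x xs =>
      obtain ⟨hx, hxs⟩ := List.cons_eq_cons.mp hxs
      exact le_iSup₂_of_le (⟨x, hx⟩ : {x // f x = y}) (⟨xs, hxs⟩ : {xs : List X // xs.map f = ys})
        le_rfl
  · exact iSup₂_le fun x xs =>
      le_iSup_of_le (f := fun xs : {xs : List X // xs.map f = y :: ys} => g xs.1)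
        ⟨x.1 :: xs.1, by simp [x.2, xs.2]⟩ le_rfl

end Fbang

theorem lam_natural_general (V : Type*) [CompleteLattice V] [CommMonoid V]
    (hl : ∀ (u : V) (S : Set V), u * sSup S = ⨆ v ∈ S, u * v)
    {X Y : Type*} (f : X → Y) (σs : List (X → V)) :
    fbang (List.map f) (lamLaw σs) = lamLaw (σs.map (fbang f)) := by
  funext ys
  induction σs generalizing ys with
  | nil => cases ys <;> simp [fbang_map_cons]
  | cons σ σs ih =>
    cases ys with
    | nil => simp
    | cons y ys =>
      have hbot := mul_bot_of_mul_sSup hl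
      rw [List.map_cons, lamLaw_cons_cons hbot, ← ih, fbang_map_cons]
      simp only [lamLaw_cons_cons hbot]
      exact (iSup_mul_iSup_of_mul_sSup hl _ _).symm

/-- For a commutative quantale `V`, the family `λ` is a natural transformation
`L ∘ P_V → P_V ∘ L`: for every `f : X → Y`, `(Lf)_! ∘ λ_X = λ_Y ∘ L(f_!)`. -/
theorem lam_natural (V : Type*) [CompleteLattice V] [CommMonoid V]
    (hl : ∀ (u : V) (S : Set V), u * sSup S = ⨆ v ∈ S, u * v)
    (hr : ∀ (u : V) (S : Set V), sSup S * u = ⨆ v ∈ S, v * u)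
    {X Y : Type*} (f : X → Y) (σs : List (X → V)) :
    fbang (List.map f) (lamLaw σs) = lamLaw (σs.map (fbang f)) :=
  lam_natural_general V hl f σs
end

section
/- For a commutative and completely distributive quantale V, the map ξ : UV → V on ultrafilters of V defined by ξ(𝔷) = ⋀_{C ∈ 𝔷} ⋁ C satisfies ξ(𝔷) = ⋁_{C ∈ 𝔷} ⋀ C for every ultrafilter 𝔷 on V. -/
/-!
Both sides are `limsup id z` and `liminf id z`. By complete distributivity the limsup is the
supremum, over choices of a point `g s ∈ s` for every `s ∈ z`, of `b = ⨅ s, g s`; every member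
of `z` meets `{v | b ≤ v}`, so this set lies in the ultrafilter and `b ≤ liminf`.
-/

open Filter

theorem Ultrafilter.limsup_le_liminf {β V : Type*} [CompletelyDistribLattice V]
    (z : Ultrafilter β) (u : β → V) : limsup u z ≤ liminf u z := by
  have hsup : limsup u z = ⨅ s : {s : Set β // s ∈ z}, ⨆ a : s.1, u a := by
    rw [limsup_eq_iInf_iSup, iInf_subtype']
    simp only [iSup_subtype']
    rfl
  rw [hsup, iInf_iSup_eq]
  refine iSup_le fun g => le_liminf_of_le (by isBoundedDefault) ?_
  refine Ultrafilter.frequently_iff_eventually.1 (frequently_iff.2 fun {s} hs => ?_)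
  exact ⟨g ⟨s, hs⟩, (g ⟨s, hs⟩).2, iInf_le (fun t => u (g t)) ⟨s, hs⟩⟩

theorem Ultrafilter.limsup_eq_liminf {β V : Type*} [CompletelyDistribLattice V]
    (z : Ultrafilter β) (u : β → V) : limsup u z = liminf u z :=
  le_antisymm (z.limsup_le_liminf u) liminf_le_limsup

/-- For a completely distributive (complete) lattice `V` and an ultrafilter `𝔷` on the
set `V`, one has `⨅_{C ∈ 𝔷} ⋁ C = ⨆_{C ∈ 𝔷} ⋀ C`. -/
theorem ultrafilter_inf_sup_eq_sup_inf (V : Type*) [CompletelyDistribLattice V]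
    (z : Ultrafilter V) :
    ⨅ C ∈ z, sSup C = ⨆ C ∈ z, sInf C := by
  simpa only [limsup_eq_iInf_iSup, liminf_eq_iSup_iInf, id, ← sSup_eq_iSup, ← sInf_eq_iInf,
    Ultrafilter.mem_coe] using z.limsup_eq_liminf id
end
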